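/- arXiv:1011.2860 — 2 statements merged into one kernel-verified Lean document; each statement's English description precedes it below -/
import Mathlib

section
/- Let R be a commutative ring and G a monic Gröbner basis of the ideal I = ⟨G⟩ in the free R-algebra R⟨X⟩ = R⟨X₁,...,Xₙ⟩ with respect to a monomial ordering ≺ on B_R. Then the canonical image of the set N(G) of normal words (mod G) under the quotient map R⟨X⟩ → R⟨X⟩/I forms a free R-basis of the R-module R⟨X⟩/I. -/
open scoped Classical

/-- Words in the alphabet `X₁,...,Xₙ`: the standard basis `B` of monomials of the free algebra. -/
abbrev Word (n : ℕ) : Type := FreeMonoid (Fin n)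

/-- The free `R`-algebra `R⟨X₁,...,Xₙ⟩`, realized as the monoid algebra on words. -/
abbrev FreeAlg (R : Type) [CommRing R] (n : ℕ) : Type := MonoidAlgebra R (Word n)

/-- `v` divides `u` as words: `u = w * v * s` for some words `w, s`. -/
def WordDvd {n : ℕ} (v u : Word n) : Prop := ∃ w s : Word n, u = w * v * s

/-- A monomial ordering on the words in `X₁,...,Xₙ`: a well-ordering `≺` such that
(M1) `u ≺ v` implies `w*u*s ≺ w*v*s`, and (M2) `w = u*v` implies `u ⪯ w` and `v ⪯ w`. -/
structure MonomialOrdering (n : ℕ) where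
  lt : Word n → Word n → Prop
  strictTotal : IsStrictTotalOrder (Word n) lt
  wellFounded : WellFounded lt
  mul_compat : ∀ w u v s : Word n, lt u v → lt (w * u * s) (w * v * s)
  factor_le : ∀ u v : Word n, ¬ lt (u * v) u ∧ ¬ lt (u * v) v

namespace MonomialOrdering

/-- `u ⪯ v` for a monomial ordering. -/
def le {n : ℕ} (o : MonomialOrdering n) (u v : Word n) : Prop := u = v ∨ o.lt u v

end MonomialOrdering

/-- The leading monomial `LM(f)` of `f`: the `≺`-greatest word occurring in `f`
(with junk value `1` if `f = 0`). -/
noncomputable def LM {R : Type} [CommRing R] {n : ℕ} (o : MonomialOrdering n)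
    (f : FreeAlg R n) : Word n :=
  if h : ∃ w, w ∈ f.coeff.support ∧ ∀ u ∈ f.coeff.support, o.le u w then h.choose else 1

/-- The leading coefficient `LC(f)` of `f`: the coefficient of `LM(f)` in `f`. -/
noncomputable def LC {R : Type} [CommRing R] {n : ℕ} (o : MonomialOrdering n)
    (f : FreeAlg R n) : R := f.coeff (LM o f)

/-- A subset `G` is monic if every `g ∈ G` is nonzero with leading coefficient `1`. -/
def IsMonicSet {R : Type} [CommRing R] {n : ℕ} (o : MonomialOrdering n)
    (G : Set (FreeAlg R n)) : Prop := ∀ g ∈ G, g ≠ 0 ∧ LC o g = 1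

/-- `G` is a monic Gröbner basis of the two-sided ideal `I`: a monic subset of `I` such that
the leading monomial of every nonzero `f ∈ I` is divisible by `LM(g)` for some `g ∈ G`. -/
def IsMonicGB {R : Type} [CommRing R] {n : ℕ} (o : MonomialOrdering n)
    (G : Set (FreeAlg R n)) (I : TwoSidedIdeal (FreeAlg R n)) : Prop :=
  (∀ g ∈ G, g ∈ I) ∧ IsMonicSet o G ∧
    ∀ f : FreeAlg R n, f ∈ I → f ≠ 0 → ∃ g ∈ G, WordDvd (LM o g) (LM o f)

/-- The word `u` viewed as a monomial (with coefficient `1`) of the free algebra. -/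
noncomputable def mono (R : Type) [CommRing R] {n : ℕ} (u : Word n) : FreeAlg R n :=
  MonoidAlgebra.single u 1

/-- `f` has a Gröbner representation `f = Σ_{i} λ_i u_i g_i v_i` with
`LM(u_i g_i v_i) ⪯ LM(f)` whenever `λ_i ≠ 0`. -/
def HasGroebnerRep {R : Type} [CommRing R] {n : ℕ} (o : MonomialOrdering n)
    (G : Set (FreeAlg R n)) (f : FreeAlg R n) : Prop :=
  ∃ (m : ℕ) (lam : Fin m → R) (u v : Fin m → Word n) (g : Fin m → FreeAlg R n),
    (∀ i, g i ∈ G) ∧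
    f = ∑ i, lam i • (mono R (u i) * g i * mono R (v i)) ∧
    ∀ i, lam i ≠ 0 → o.le (LM o (mono R (u i) * g i * mono R (v i))) (LM o f)

/-- The set `N(G)` of normal words (mod `G`): words divisible by no `LM(g)`, `g ∈ G`. -/
def NSet {R : Type} [CommRing R] {n : ℕ} (o : MonomialOrdering n)
    (G : Set (FreeAlg R n)) : Set (Word n) :=
  {u : Word n | ∀ g ∈ G, ¬ WordDvd (LM o g) u}

/-- `f` is a normal element (mod `G`): every word occurring in `f` is normal. -/
def IsNormal {R : Type} [CommRing R] {n : ℕ} (o : MonomialOrdering n)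
    (G : Set (FreeAlg R n)) (f : FreeAlg R n) : Prop :=
  ∀ u ∈ f.coeff.support, u ∈ NSet o G

/-- `G` is LM-reduced: `LM(g) ∤ LM(g')` for distinct `g, g' ∈ G`. -/
def LMReduced {R : Type} [CommRing R] {n : ℕ} (o : MonomialOrdering n)
    (G : Set (FreeAlg R n)) : Prop :=
  ∀ g ∈ G, ∀ g' ∈ G, g ≠ g' → ¬ WordDvd (LM o g) (LM o g')

/-- A two-sided ideal of the free `R`-algebra, viewed as an `R`-submodule. -/
def tsiSubmodule {R : Type} [CommRing R] {n : ℕ} (I : TwoSidedIdeal (FreeAlg R n)) :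
    Submodule R (FreeAlg R n) where
  carrier := {f : FreeAlg R n | f ∈ I}
  add_mem' ha hb := I.add_mem ha hb
  zero_mem' := I.zero_mem
  smul_mem' c x hx := by
    have : c • x = (algebraMap R (FreeAlg R n) c) * x := Algebra.smul_def c x
    rw [Set.mem_setOf_eq, this]
    exact I.mul_mem_left _ _ hx

/-!
The `R`-span of the normal words is a complement of `I`. It meets `I` trivially because the
leading word of a nonzero element of `I` is not normal. Together with `I` it contains every
word, by well-founded induction on `≺`: a non-normal word `w = a LM(g) b` differs from
`a g b ∈ I` only by words smaller than `w`, as `g` is monic. So `R⟨X⟩/I` is isomorphic to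
this complement, which has the normal words as a basis.
-/

namespace MonomialOrdering

variable {n : ℕ} (o : MonomialOrdering n)

lemma exists_max (s : Finset (Word n)) (hs : s.Nonempty) : ∃ w ∈ s, ∀ u ∈ s, o.le u w :=
  -- the `≤` of `linearOrderOfSTO o.lt` is `o.le` by definition
  letI := @linearOrderOfSTO _ o.lt o.strictTotal (Classical.decRel _)
  s.exists_max_image id hs

end MonomialOrdering

section LeadingMonomial

variable {R : Type} [CommRing R] {n : ℕ} (o : MonomialOrdering n)

lemma LM_spec {f : FreeAlg R n} (hf : f ≠ 0) :
    LM o f ∈ f.coeff.support ∧ ∀ u ∈ f.coeff.support, o.le u (LM o f) := by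
  have h := o.exists_max f.coeff.support (by simpa using hf)
  rw [LM, dif_pos h]
  exact h.choose_spec

lemma LM_mem_support {f : FreeAlg R n} (hf : f ≠ 0) : LM o f ∈ f.coeff.support :=
  (LM_spec o hf).1

lemma le_LM {f : FreeAlg R n} {u : Word n} (hu : u ∈ f.coeff.support) : o.le u (LM o f) :=
  (LM_spec o (by rintro rfl; simp at hu)).2 u hu

end LeadingMonomial

namespace MonoidAlgebra

variable {R M : Type*} [Semiring R]

lemma support_coeff_single_mul_mul_single_subset [Mul M] [DecidableEq M] (a b : M) (r r' : R)
    (f : MonoidAlgebra R M) :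
    (single a r * f * single b r').coeff.support ⊆ f.coeff.support.image (a * · * b) := by
  grw [support_coeff_mul_single_subset, support_coeff_single_mul_subset, Finset.image_image]
  rfl

lemma mem_of_forall_single_one_mem [MulOneClass M] {S : Submodule R (MonoidAlgebra R M)}
    {f : MonoidAlgebra R M} (hf : ∀ u ∈ f.coeff.support, single u 1 ∈ S) : f ∈ S := by
  refine Submodule.span_le.mpr ?_ (mem_span_support_coeff f)
  rintro _ ⟨u, hu, rfl⟩
  exact hf u hu

noncomputable def supportedBasis (s : Set M) : Module.Basis s R (supported R R s) :=
  Finsupp.basisSingleOne.map (supportedEquivFinsupp s).symm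

@[simp]
lemma coe_supportedBasis (s : Set M) (u : s) :
    (supportedBasis (R := R) s u : MonoidAlgebra R M) = single u.1 1 := by
  simp [supportedBasis, supportedEquivFinsupp, LinearEquiv.trans_symm]

end MonoidAlgebra

section GroebnerBasis

variable {R : Type} [CommRing R] {n : ℕ} {o : MonomialOrdering n}

lemma lt_of_mem_support_mono_sub_mono_mul_mul_mono {g : FreeAlg R n} (hLC : LC o g = 1)
    (a b : Word n) {u : Word n}
    (hu : u ∈ (mono R (a * LM o g * b) - mono R a * g * mono R b).coeff.support) :
    o.lt u (a * LM o g * b) := by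
  have hne : u ≠ a * LM o g * b := by
    rintro rfl
    have hLC' : g.coeff (LM o g) = 1 := hLC
    simp [mono, hLC'] at hu
  rw [MonoidAlgebra.coeff_sub] at hu
  rcases Finset.mem_union.mp (Finsupp.support_sub hu) with hu | hu
  · simp [mono, hne] at hu
  · obtain ⟨v, hv, rfl⟩ := Finset.mem_image.mp
      (MonoidAlgebra.support_coeff_single_mul_mul_single_subset a b 1 1 g hu)
    have hv' : v ≠ LM o g := by rintro rfl; exact hne rfl
    exact o.mul_compat a v _ b ((le_LM o hv).resolve_left hv')

variable {G : Set (FreeAlg R n)} {I : TwoSidedIdeal (FreeAlg R n)}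

theorem disjoint_tsiSubmodule_supported_NSet (hGB : IsMonicGB o G I) :
    Disjoint (tsiSubmodule I) (MonoidAlgebra.supported R R (NSet o G)) := by
  rw [Submodule.disjoint_def]
  intro f hfI hfN
  by_contra hf
  obtain ⟨g, hg, hdvd⟩ := hGB.2.2 f hfI hf
  exact hfN (LM_mem_support o hf) g hg hdvd

theorem mono_mem_tsiSubmodule_sup_supported_NSet (hGB : IsMonicGB o G I) (w : Word n) :
    mono R w ∈ tsiSubmodule I ⊔ MonoidAlgebra.supported R R (NSet o G) := by
  induction w using o.wellFounded.induction with
  | _ w ih =>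
  by_cases hw : w ∈ NSet o G
  · refine Submodule.mem_sup_right ?_
    intro u hu
    rwa [Finset.mem_singleton.mp (Finsupp.support_single_subset hu)]
  obtain ⟨g, hg, a, b, rfl⟩ : ∃ g ∈ G, WordDvd (LM o g) w := by
    simpa [NSet] using hw
  have hgI : mono R a * g * mono R b ∈ tsiSubmodule I :=
    I.mul_mem_right _ _ (I.mul_mem_left _ _ (hGB.1 g hg))
  have hlower := MonoidAlgebra.mem_of_forall_single_one_mem fun u hu ↦
    ih u (lt_of_mem_support_mono_sub_mono_mul_mul_mono (hGB.2.1 g hg).2 a b hu)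
  simpa only [sub_add_cancel] using Submodule.add_mem _ hlower (Submodule.mem_sup_left hgI)

theorem isCompl_tsiSubmodule_supported_NSet (hGB : IsMonicGB o G I) :
    IsCompl (tsiSubmodule I) (MonoidAlgebra.supported R R (NSet o G)) := by
  refine ⟨disjoint_tsiSubmodule_supported_NSet hGB, codisjoint_iff.mpr (eq_top_iff.mpr ?_)⟩
  intro f _
  exact MonoidAlgebra.mem_of_forall_single_one_mem fun u _ ↦
    mono_mem_tsiSubmodule_sup_supported_NSet hGB u

end GroebnerBasis

theorem normal_words_basis_of_quotient_general {R : Type} [CommRing R] {n : ℕ}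
    (o : MonomialOrdering n) (G : Set (FreeAlg R n)) (I : TwoSidedIdeal (FreeAlg R n))
    (hGB : IsMonicGB o G I) :
    ∃ b : Module.Basis (NSet o G) R (FreeAlg R n ⧸ tsiSubmodule I),
      ∀ u : NSet o G, b u = Submodule.Quotient.mk (mono R u.1) := by
  let e := Submodule.quotientEquivOfIsCompl _ _ (isCompl_tsiSubmodule_supported_NSet hGB)
  refine ⟨(MonoidAlgebra.supportedBasis (NSet o G)).map e.symm, fun u ↦ ?_⟩
  simp [e, mono]

/-- **Theorem 2.4 (iii).**  Let `G` be a monic Gröbner basis of the ideal `I = ⟨G⟩` of the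
free `R`-algebra `R⟨X₁,...,Xₙ⟩`.  Then the canonical image of the set `N(G)` of normal words
(mod `G`) in `R⟨X⟩/I` is a free `R`-basis of the `R`-module `R⟨X⟩/I`. -/
theorem normal_words_basis_of_quotient {R : Type} [CommRing R] {n : ℕ}
    (o : MonomialOrdering n) (G : Set (FreeAlg R n)) (I : TwoSidedIdeal (FreeAlg R n))
    (hgen : I = TwoSidedIdeal.span G) (hGB : IsMonicGB o G I) :
    ∃ b : Module.Basis (NSet o G) R (FreeAlg R n ⧸ tsiSubmodule I),
      ∀ u : NSet o G, b u = Submodule.Quotient.mk (mono R u.1) :=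
  normal_words_basis_of_quotient_general o G I hGB
end

section
/- Let A be a Γ-filtered ring with an exhaustive and separated Γ-filtration FA such that 1 ∈ F₀A − F_{<0}A, where Γ is a totally ordered abelian additive group, and suppose the associated graded ring G(A) is a domain (hence A is a domain) and that A is an Ore domain with (skew-)field of fractions Δ. Then the valuation v(a) = −d(a) on A extends uniquely to a valuation on Δ, subject to v(ab⁻¹) = v(a) − v(b) for a, b ∈ A with b ≠ 0. -/
/-- Axioms (V1)–(V3) for a valuation function on a ring `A` with values in
`Γ ∪ {∞}`, realized as `WithTop Γ`: `v a = ∞` iff `a = 0`; `v (ab) = v a + v b`;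
`v (a+b) ≥ min (v a) (v b)`. -/
def IsValuationFn {A : Type} [Ring A] {Γ : Type} [AddCommGroup Γ] [LinearOrder Γ] [IsOrderedAddMonoid Γ]
    (v : A → WithTop Γ) : Prop :=
  (∀ a : A, v a = ⊤ ↔ a = 0) ∧ (∀ a b : A, v (a * b) = v a + v b) ∧
    ∀ a b : A, min (v a) (v b) ≤ v (a + b)

/-- A valuation of a ring `A` (in the sense of O. Schilling): a surjective function
`v : A → Γ ∪ {∞}` satisfying (V1)–(V3). -/
def IsValuation {A : Type} [Ring A] {Γ : Type} [AddCommGroup Γ] [LinearOrder Γ] [IsOrderedAddMonoid Γ]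
    (v : A → WithTop Γ) : Prop :=
  Function.Surjective v ∧ IsValuationFn v

/-- The exhaustive `Γ`-filtration `F^v_γA = {a ∈ A : v a ≥ -γ}` determined by a
valuation `v`. -/
def valFiltration {A : Type} [Ring A] {Γ : Type} [AddCommGroup Γ] [LinearOrder Γ] [IsOrderedAddMonoid Γ]
    (v : A → WithTop Γ) (γ : Γ) : Set A :=
  {a : A | ((-γ : Γ) : WithTop Γ) ≤ v a}

/-- The statement that the associated `Γ`-graded ring `G(A) = ⊕_γ F_γA/F_{<γ}A` of a
`Γ`-filtration on `A` is a domain.  Since `Γ` is a totally ordered group, `G(A)` is a domain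
iff the product of any two nonzero homogeneous elements is nonzero; this is expressed here at
the level of the filtration: whenever `a` represents a nonzero class of `F_γA/F_{<γ}A` and
`b` a nonzero class of `F_τA/F_{<τ}A`, the product `a*b` represents a nonzero class of
`F_{γ+τ}A/F_{<γ+τ}A`. -/
def AssociatedGradedIsDomain {A : Type} [Ring A] {Γ : Type} [AddCommGroup Γ] [LinearOrder Γ] [IsOrderedAddMonoid Γ]
    (F : Γ → Set A) : Prop :=
  ∀ (γ τ : Γ) (a b : A), a ∈ F γ → (∀ γ' < γ, a ∉ F γ') → b ∈ F τ → (∀ τ' < τ, b ∉ F τ') →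
    (a * b ∈ F (γ + τ) ∧ ∀ ρ < γ + τ, a * b ∉ F ρ)

/-- An exhaustive `Γ`-filtration on a ring `S`: a family of additive subgroups `F γ` of `S`
with (F1) `S = ∪_γ F γ`, (F2) `F γ₁ ⊆ F γ₂` for `γ₁ < γ₂`, (F3) `F γ · F τ ⊆ F (γ+τ)`,
(F4) `1 ∈ F 0`. -/
structure RingFiltration (Γ : Type) [AddMonoid Γ] [LinearOrder Γ] (S : Type) [Ring S] where
  F : Γ → AddSubgroup S
  exhaustive : ∀ s : S, ∃ γ : Γ, s ∈ F γ
  mono : ∀ ⦃γ₁ γ₂ : Γ⦄, γ₁ < γ₂ → F γ₁ ≤ F γ₂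
  mul_mem : ∀ ⦃γ τ : Γ⦄ ⦃a b : S⦄, a ∈ F γ → b ∈ F τ → a * b ∈ F (γ + τ)
  one_mem : 1 ∈ F 0

/-! Because `G(A)` is a domain, degrees add under multiplication, so `v = -d` is a valuation
on `A`. In the Ore domain `A`, `a b⁻¹ = c d⁻¹` forces `a p = c q` and `b p = d q` for some
nonzero `p, q`, so `v a - v b` depends only on the fraction `a b⁻¹`. After bringing two
fractions to a common right denominator (for sums) or moving a denominator past a numerator
by the Ore condition (for products), the valuation axioms on `Δ` reduce to those of `v` on `A`;
uniqueness is forced by the rule `w (a b⁻¹) = v a - v b`. -/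

theorem LinearOrderedAddCommGroupWithTop.add_sub_add_right_of_ne_top {α : Type}
    [LinearOrderedAddCommGroupWithTop α] {a b c : α} (hc : c ≠ ⊤) :
    a + c - (b + c) = a - b := by
  rw [sub_eq_add_neg, sub_eq_add_neg, neg_add_rev, add_comm (-c), ← add_assoc, add_right_comm,
    LinearOrderedAddCommGroupWithTop.add_neg_cancel_right_of_ne_top hc]

namespace IsValuationFn

variable {A : Type} [Ring A] {Γ : Type} [AddCommGroup Γ] [LinearOrder Γ] [IsOrderedAddMonoid Γ]
  {v : A → WithTop Γ}

theorem eq_top_iff (hv : IsValuationFn v) (a : A) : v a = ⊤ ↔ a = 0 :=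
  hv.1 a

theorem map_mul (hv : IsValuationFn v) (a b : A) : v (a * b) = v a + v b :=
  hv.2.1 a b

theorem min_le_map_add (hv : IsValuationFn v) (a b : A) : min (v a) (v b) ≤ v (a + b) :=
  hv.2.2 a b

theorem ne_top (hv : IsValuationFn v) {a : A} (ha : a ≠ 0) : v a ≠ ⊤ :=
  (hv.eq_top_iff a).not.2 ha

theorem map_one [Nontrivial A] (hv : IsValuationFn v) : v 1 = 0 := by
  have h : v 1 + v 1 = 0 + v 1 := by rw [← hv.map_mul, mul_one, zero_add]
  exact (add_left_inj_of_ne_top (hv.ne_top one_ne_zero)).1 h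

theorem sub_mul_right (hv : IsValuationFn v) (a b : A) {q : A} (hq : q ≠ 0) :
    v (a * q) - v (b * q) = v a - v b := by
  rw [hv.map_mul, hv.map_mul,
    LinearOrderedAddCommGroupWithTop.add_sub_add_right_of_ne_top (hv.ne_top hq)]

end IsValuationFn

namespace RingFiltration

theorem monotone {Γ : Type} [AddMonoid Γ] [LinearOrder Γ] {S : Type} [Ring S]
    (FA : RingFiltration Γ S) : Monotone FA.F :=
  monotone_iff_forall_lt.2 fun _ _ h => FA.mono h

variable {A : Type} [Ring A] {Γ : Type} [AddCommGroup Γ] [LinearOrder Γ] [IsOrderedAddMonoid Γ]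
  {FA : RingFiltration Γ A} {v : A → WithTop Γ}

theorem subset_valFiltration_of_degree
    (hsep : ∀ a : A, a ≠ 0 → ∃ γ : Γ, a ∈ FA.F γ ∧ ∀ γ' < γ, a ∉ FA.F γ') (hv0 : v 0 = ⊤)
    (hvd : ∀ a : A, a ≠ 0 → ∀ γ : Γ, a ∈ FA.F γ → (∀ γ' < γ, a ∉ FA.F γ') →
      v a = ((-γ : Γ) : WithTop Γ)) (γ : Γ) :
    (FA.F γ : Set A) ⊆ valFiltration v γ := by
  intro a ha
  rcases eq_or_ne a 0 with rfl | h0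
  · simp [valFiltration, hv0]
  obtain ⟨ρ, hρ, hρmin⟩ := hsep a h0
  have hργ : ρ ≤ γ := not_lt.1 fun h => hρmin γ h ha
  change ((-γ : Γ) : WithTop Γ) ≤ v a
  rw [hvd a h0 ρ hρ hρmin]
  exact WithTop.coe_le_coe.2 (neg_le_neg hργ)

theorem eq_top_iff_of_degree
    (hsep : ∀ a : A, a ≠ 0 → ∃ γ : Γ, a ∈ FA.F γ ∧ ∀ γ' < γ, a ∉ FA.F γ') (hv0 : v 0 = ⊤)
    (hvd : ∀ a : A, a ≠ 0 → ∀ γ : Γ, a ∈ FA.F γ → (∀ γ' < γ, a ∉ FA.F γ') →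
      v a = ((-γ : Γ) : WithTop Γ)) (a : A) :
    v a = ⊤ ↔ a = 0 := by
  refine ⟨fun h => by_contra fun h0 => ?_, fun h => h ▸ hv0⟩
  obtain ⟨γ, hγ, hγmin⟩ := hsep a h0
  simp [hvd a h0 γ hγ hγmin] at h

theorem map_mul_of_degree [NoZeroDivisors A]
    (hsep : ∀ a : A, a ≠ 0 → ∃ γ : Γ, a ∈ FA.F γ ∧ ∀ γ' < γ, a ∉ FA.F γ')
    (hdom : AssociatedGradedIsDomain (fun γ => (FA.F γ : Set A))) (hv0 : v 0 = ⊤)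
    (hvd : ∀ a : A, a ≠ 0 → ∀ γ : Γ, a ∈ FA.F γ → (∀ γ' < γ, a ∉ FA.F γ') →
      v a = ((-γ : Γ) : WithTop Γ)) (a b : A) :
    v (a * b) = v a + v b := by
  rcases eq_or_ne a 0 with rfl | ha
  · simp [hv0]
  rcases eq_or_ne b 0 with rfl | hb
  · simp [hv0]
  obtain ⟨γ, hγ, hγmin⟩ := hsep a ha
  obtain ⟨τ, hτ, hτmin⟩ := hsep b hb
  obtain ⟨hab, habmin⟩ := hdom γ τ a b hγ hγmin hτ hτmin
  rw [hvd a ha γ hγ hγmin, hvd b hb τ hτ hτmin, hvd (a * b) (mul_ne_zero ha hb) _ hab habmin,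
    neg_add, WithTop.coe_add]

theorem min_le_add_of_degree
    (hsep : ∀ a : A, a ≠ 0 → ∃ γ : Γ, a ∈ FA.F γ ∧ ∀ γ' < γ, a ∉ FA.F γ') (hv0 : v 0 = ⊤)
    (hvd : ∀ a : A, a ≠ 0 → ∀ γ : Γ, a ∈ FA.F γ → (∀ γ' < γ, a ∉ FA.F γ') →
      v a = ((-γ : Γ) : WithTop Γ)) (a b : A) :
    min (v a) (v b) ≤ v (a + b) := by
  rcases eq_or_ne a 0 with rfl | ha
  · simp [hv0]
  rcases eq_or_ne b 0 with rfl | hb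
  · simp [hv0]
  obtain ⟨γ, hγ, hγmin⟩ := hsep a ha
  obtain ⟨τ, hτ, hτmin⟩ := hsep b hb
  have hab : a + b ∈ FA.F (max γ τ) :=
    add_mem (FA.monotone (le_max_left γ τ) hγ) (FA.monotone (le_max_right γ τ) hτ)
  calc min (v a) (v b) = ((-max γ τ : Γ) : WithTop Γ) := by
        rw [hvd a ha γ hγ hγmin, hvd b hb τ hτ hτmin, ← WithTop.coe_min, min_neg_neg]
    _ ≤ v (a + b) := subset_valFiltration_of_degree hsep hv0 hvd _ hab

theorem isValuationFn_of_degree [NoZeroDivisors A]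
    (hsep : ∀ a : A, a ≠ 0 → ∃ γ : Γ, a ∈ FA.F γ ∧ ∀ γ' < γ, a ∉ FA.F γ')
    (hdom : AssociatedGradedIsDomain (fun γ => (FA.F γ : Set A))) (hv0 : v 0 = ⊤)
    (hvd : ∀ a : A, a ≠ 0 → ∀ γ : Γ, a ∈ FA.F γ → (∀ γ' < γ, a ∉ FA.F γ') →
      v a = ((-γ : Γ) : WithTop Γ)) :
    IsValuationFn v :=
  ⟨eq_top_iff_of_degree hsep hv0 hvd, map_mul_of_degree hsep hdom hv0 hvd,
    min_le_add_of_degree hsep hv0 hvd⟩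

end RingFiltration

section Fractions

variable {A : Type} [Ring A] {Γ : Type} [AddCommGroup Γ] [LinearOrder Γ] [IsOrderedAddMonoid Γ]
  {Δ : Type} [DivisionRing Δ] {ι : A →+* Δ} {v : A → WithTop Γ}

structure IsRightFractions (ι : A →+* Δ) : Prop where
  injective : Function.Injective ι
  exists_eq_mul_inv : ∀ x : Δ, ∃ a b : A, b ≠ 0 ∧ x = ι a * (ι b)⁻¹

theorem mul_inv_eq_mul_mul_mul_inv {K : Type} [DivisionRing K] (x y : K) {z : K} (hz : z ≠ 0) :
    x * y⁻¹ = x * z * (y * z)⁻¹ := by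
  rw [mul_inv_rev, mul_assoc, mul_inv_cancel_left₀ hz]

namespace IsRightFractions

variable (hΔ : IsRightFractions ι)
include hΔ

theorem isDomain : IsDomain A :=
  hΔ.injective.isDomain ι

theorem map_ne_zero {b : A} (hb : b ≠ 0) : ι b ≠ 0 :=
  (map_ne_zero_iff ι hΔ.injective).2 hb

theorem exists_ore {b : A} (hb : b ≠ 0) (c : A) :
    ∃ p q : A, q ≠ 0 ∧ (ι b)⁻¹ * ι c = ι p * (ι q)⁻¹ ∧ c * q = b * p := by
  obtain ⟨p, q, hq, h⟩ := hΔ.exists_eq_mul_inv ((ι b)⁻¹ * ι c)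
  refine ⟨p, q, hq, h, hΔ.injective ?_⟩
  rw [map_mul, map_mul, ← mul_inv_cancel_left₀ (hΔ.map_ne_zero hb) (ι c), h, mul_assoc,
    inv_mul_cancel_right₀ (hΔ.map_ne_zero hq)]

theorem exists_common_denom (x y : Δ) :
    ∃ a c b : A, b ≠ 0 ∧ x = ι a * (ι b)⁻¹ ∧ y = ι c * (ι b)⁻¹ := by
  have := hΔ.isDomain
  obtain ⟨a, b, hb, rfl⟩ := hΔ.exists_eq_mul_inv x
  obtain ⟨c, d, hd, rfl⟩ := hΔ.exists_eq_mul_inv y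
  obtain ⟨p, q, hq, -, hdq⟩ := hΔ.exists_ore hb d
  have hbp : b * p ≠ 0 := hdq ▸ mul_ne_zero hd hq
  refine ⟨a * p, c * q, b * p, hbp, ?_, ?_⟩
  · rw [map_mul, map_mul,
      ← mul_inv_eq_mul_mul_mul_inv _ _ (hΔ.map_ne_zero (right_ne_zero_of_mul hbp))]
  · rw [← hdq, map_mul, map_mul, ← mul_inv_eq_mul_mul_mul_inv _ _ (hΔ.map_ne_zero hq)]

theorem sub_eq_sub_of_mul_inv_eq (hv : IsValuationFn v) {a b c d : A} (hb : b ≠ 0) (hd : d ≠ 0)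
    (h : ι a * (ι b)⁻¹ = ι c * (ι d)⁻¹) : v a - v b = v c - v d := by
  have := hΔ.isDomain
  obtain ⟨p, q, hq, hpq, hdq⟩ := hΔ.exists_ore hb d
  have hp : p ≠ 0 := right_ne_zero_of_mul (hdq ▸ mul_ne_zero hd hq)
  have hac : a * p = c * q := hΔ.injective <| by
    calc ι (a * p) = ι a * (ι p * (ι q)⁻¹) * ι q := by
          rw [map_mul, mul_assoc, inv_mul_cancel_right₀ (hΔ.map_ne_zero hq)]
      _ = ι c * ι q := by
          rw [← hpq, ← mul_assoc, h, inv_mul_cancel_right₀ (hΔ.map_ne_zero hd)]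
      _ = ι (c * q) := (map_mul ι c q).symm
  calc v a - v b = v (a * p) - v (b * p) := (hv.sub_mul_right a b hp).symm
    _ = v (c * q) - v (d * q) := by rw [hac, hdq]
    _ = v c - v d := hv.sub_mul_right c d hq

end IsRightFractions

open Classical in
/-- The `else` branch is never taken when `ι` is a right ring of fractions. -/
noncomputable def extendToFractions (v : A → WithTop Γ) (ι : A →+* Δ) (x : Δ) : WithTop Γ :=
  if h : ∃ r : A × A, r.2 ≠ 0 ∧ x = ι r.1 * (ι r.2)⁻¹ then v h.choose.1 - v h.choose.2 else ⊤

variable (hΔ : IsRightFractions ι) (hv : IsValuationFn v)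
include hΔ hv

theorem extendToFractions_mul_inv (a : A) {b : A} (hb : b ≠ 0) :
    extendToFractions v ι (ι a * (ι b)⁻¹) = v a - v b := by
  have h : ∃ r : A × A, r.2 ≠ 0 ∧ ι a * (ι b)⁻¹ = ι r.1 * (ι r.2)⁻¹ := ⟨(a, b), hb, rfl⟩
  rw [extendToFractions, dif_pos h]
  exact hΔ.sub_eq_sub_of_mul_inv_eq hv h.choose_spec.1 hb h.choose_spec.2.symm

theorem extendToFractions_mul_inv_add (a : A) {b : A} (hb : b ≠ 0) :
    extendToFractions v ι (ι a * (ι b)⁻¹) + v b = v a := by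
  rw [extendToFractions_mul_inv hΔ hv a hb, sub_eq_add_neg,
    LinearOrderedAddCommGroupWithTop.neg_add_cancel_right_of_ne_top (hv.ne_top hb)]

theorem extendToFractions_coe (a : A) : extendToFractions v ι (ι a) = v a := by
  have : Nontrivial A := ι.domain_nontrivial
  simpa [hv.map_one] using extendToFractions_mul_inv hΔ hv a one_ne_zero

theorem extendToFractions_eq_top_iff (x : Δ) : extendToFractions v ι x = ⊤ ↔ x = 0 := by
  obtain ⟨a, b, hb, rfl⟩ := hΔ.exists_eq_mul_inv x
  rw [extendToFractions_mul_inv hΔ hv a hb, WithTop.LinearOrderedAddCommGroup.sub_eq_top_iff,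
    hv.eq_top_iff, hv.eq_top_iff, or_iff_left hb, mul_eq_zero, inv_eq_zero,
    map_eq_zero_iff ι hΔ.injective, map_eq_zero_iff ι hΔ.injective, or_iff_left hb]

theorem extendToFractions_mul_coe (x : Δ) (c : A) :
    extendToFractions v ι (x * ι c) = extendToFractions v ι x + v c := by
  obtain ⟨a, b, hb, rfl⟩ := hΔ.exists_eq_mul_inv x
  obtain ⟨p, q, hq, hpq, hcq⟩ := hΔ.exists_ore hb c
  have hx : ι a * (ι b)⁻¹ * ι c = ι (a * p) * (ι q)⁻¹ := by
    rw [mul_assoc, hpq, map_mul, mul_assoc]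
  apply (add_left_inj_of_ne_top (hv.ne_top hq)).1
  calc extendToFractions v ι (ι a * (ι b)⁻¹ * ι c) + v q = v (a * p) := by
        rw [hx, extendToFractions_mul_inv_add hΔ hv _ hq]
    _ = extendToFractions v ι (ι a * (ι b)⁻¹) + v (b * p) := by
        rw [hv.map_mul, hv.map_mul b, ← add_assoc, extendToFractions_mul_inv_add hΔ hv _ hb]
    _ = extendToFractions v ι (ι a * (ι b)⁻¹) + v c + v q := by
        rw [← hcq, hv.map_mul, add_assoc]

theorem extendToFractions_mul (x y : Δ) :
    extendToFractions v ι (x * y) = extendToFractions v ι x + extendToFractions v ι y := by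
  obtain ⟨c, d, hd, rfl⟩ := hΔ.exists_eq_mul_inv y
  rw [← add_left_inj_of_ne_top (hv.ne_top hd), ← extendToFractions_mul_coe hΔ hv, add_assoc,
    extendToFractions_mul_inv_add hΔ hv c hd, ← extendToFractions_mul_coe hΔ hv, mul_assoc,
    inv_mul_cancel_right₀ (hΔ.map_ne_zero hd)]

theorem min_le_extendToFractions_add (x y : Δ) :
    min (extendToFractions v ι x) (extendToFractions v ι y) ≤ extendToFractions v ι (x + y) := by
  obtain ⟨a, c, b, hb, rfl, rfl⟩ := hΔ.exists_common_denom x y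
  rw [← add_mul, ← map_add, extendToFractions_mul_inv hΔ hv _ hb,
    extendToFractions_mul_inv hΔ hv _ hb, extendToFractions_mul_inv hΔ hv _ hb, sub_eq_add_neg,
    sub_eq_add_neg, sub_eq_add_neg, min_add_add_right]
  gcongr
  exact hv.min_le_map_add a c

theorem isValuationFn_extendToFractions : IsValuationFn (extendToFractions v ι) :=
  ⟨extendToFractions_eq_top_iff hΔ hv, extendToFractions_mul hΔ hv,
    min_le_extendToFractions_add hΔ hv⟩

theorem eq_extendToFractions {w : Δ → WithTop Γ}
    (hw : ∀ a b : A, b ≠ 0 → w (ι a * (ι b)⁻¹) + v b = v a) : w = extendToFractions v ι := by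
  funext x
  obtain ⟨a, b, hb, rfl⟩ := hΔ.exists_eq_mul_inv x
  rw [← add_left_inj_of_ne_top (hv.ne_top hb), hw a b hb,
    extendToFractions_mul_inv_add hΔ hv a hb]

end Fractions

theorem valuation_extends_to_skewfield_general {A : Type} [Ring A] {Γ : Type}
    [AddCommGroup Γ] [LinearOrder Γ] [IsOrderedAddMonoid Γ] (FA : RingFiltration Γ A)
    (hsep : ∀ a : A, a ≠ 0 → ∃ γ : Γ, a ∈ FA.F γ ∧ ∀ γ' < γ, a ∉ FA.F γ')
    (hdom : AssociatedGradedIsDomain (fun γ => (FA.F γ : Set A)))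
    (v : A → WithTop Γ) (hv0 : v 0 = ⊤)
    (hvd : ∀ a : A, a ≠ 0 → ∀ γ : Γ, a ∈ FA.F γ → (∀ γ' < γ, a ∉ FA.F γ') →
      v a = ((-γ : Γ) : WithTop Γ))
    (Δ : Type) [DivisionRing Δ] (ι : A →+* Δ) (hinj : Function.Injective ι)
    (hfrac : ∀ x : Δ, ∃ a b : A, b ≠ 0 ∧ x = ι a * (ι b)⁻¹) :
    ∃! w : Δ → WithTop Γ, IsValuationFn w ∧ (∀ a : A, w (ι a) = v a) ∧
      ∀ a b : A, b ≠ 0 → w (ι a * (ι b)⁻¹) + v b = v a := by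
  have hΔ : IsRightFractions ι := ⟨hinj, hfrac⟩
  have := hΔ.isDomain
  have hv : IsValuationFn v := FA.isValuationFn_of_degree hsep hdom hv0 hvd
  refine ⟨extendToFractions v ι, ⟨isValuationFn_extendToFractions hΔ hv,
    extendToFractions_coe hΔ hv, fun a b hb => extendToFractions_mul_inv_add hΔ hv a hb⟩, ?_⟩
  rintro w ⟨-, -, hw⟩
  exact eq_extendToFractions hΔ hv hw

/-- **Theorem 6.2 (ii).**  Let `A` be a ring with an exhaustive and separated `Γ`-filtration
`FA` such that `1 ∈ F₀A − F_{<0}A`, suppose the associated graded ring `G(A)` is a domain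
(hence `A` is a domain), and let `v(a) = -d(a)` be the induced valuation on `A`.  If `A` is
an Ore domain with (skew-)field of fractions `Δ` (every element of `Δ` is of the form
`a·b⁻¹` with `a, b ∈ A`, `b ≠ 0`), then `v` extends in a unique way to a valuation
function `w` on `Δ`, subject to the rule `w(a·b⁻¹) = v(a) - v(b)` (expressed here
additively as `w(a·b⁻¹) + v(b) = v(a)`). -/
theorem valuation_extends_to_skewfield {A : Type} [Ring A] {Γ : Type}
    [AddCommGroup Γ] [LinearOrder Γ] [IsOrderedAddMonoid Γ] (FA : RingFiltration Γ A)
    (hsep : ∀ a : A, a ≠ 0 → ∃ γ : Γ, a ∈ FA.F γ ∧ ∀ γ' < γ, a ∉ FA.F γ')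
    (h1 : (1 : A) ∈ FA.F 0 ∧ ∀ γ' < (0 : Γ), (1 : A) ∉ FA.F γ')
    (hdom : AssociatedGradedIsDomain (fun γ => (FA.F γ : Set A)))
    (v : A → WithTop Γ) (hv0 : v 0 = ⊤)
    (hvd : ∀ a : A, a ≠ 0 → ∀ γ : Γ, a ∈ FA.F γ → (∀ γ' < γ, a ∉ FA.F γ') →
      v a = ((-γ : Γ) : WithTop Γ))
    (Δ : Type) [DivisionRing Δ] (ι : A →+* Δ) (hinj : Function.Injective ι)
    (hfrac : ∀ x : Δ, ∃ a b : A, b ≠ 0 ∧ x = ι a * (ι b)⁻¹) :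
    ∃! w : Δ → WithTop Γ, IsValuationFn w ∧ (∀ a : A, w (ι a) = v a) ∧
      ∀ a b : A, b ≠ 0 → w (ι a * (ι b)⁻¹) + v b = v a :=
  valuation_extends_to_skewfield_general FA hsep hdom v hv0 hvd Δ ι hinj hfrac
end
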